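/- Let Y be finite, π_ref fully supported, β > 0, fixed dataset D. Define g : (fully supported policies) → (rewards modulo additive constants) by g(π) = [f(π)] where f(π)(y) = β·log(π(y)/π_ref(y)). Then g is a bijection, with inverse [r] ↦ π_r where π_r(y) ∝ π_ref(y)·exp(r(y)/β). -/

import Mathlib

/-!
Write `f π = β log π - β log π_ref`. If `f π₁ - f π₂` is a constant `c`, then
`π₁ = e^{c/β} π₂`, and since both sum to `1` the factor is `1`. Conversely the Gibbs
policy `π_r = π_ref e^{r/β} / Z` has `f π_r = r - β log Z`, so it lies over the class of `r`.
-/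

open Finset

section

variable {Y : Type*} [Fintype Y]

theorem eq_of_forall_eq_mul_of_sum_eq_one {p q : Y → ℝ} {k : ℝ} (hpq : ∀ y, p y = k * q y)
    (hp : ∑ y, p y = 1) (hq : ∑ y, q y = 1) : p = q := by
  have hk : k = 1 :=
    calc k = k * ∑ y, q y := by rw [hq, mul_one]
      _ = ∑ y, p y := by rw [mul_sum]; exact (sum_congr rfl fun y _ => hpq y).symm
      _ = 1 := hp
  funext y
  rw [hpq y, hk, one_mul]

theorem eq_of_forall_log_eq_add_const {p q : Y → ℝ} {a : ℝ} (hp₀ : ∀ y, 0 < p y)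
    (hq₀ : ∀ y, 0 < q y) (hp : ∑ y, p y = 1) (hq : ∑ y, q y = 1)
    (h : ∀ y, Real.log (p y) = Real.log (q y) + a) : p = q :=
  eq_of_forall_eq_mul_of_sum_eq_one (k := Real.exp a)
    (fun y => by rw [← Real.exp_log (hp₀ y), h y, Real.exp_add, Real.exp_log (hq₀ y), mul_comm])
    hp hq

noncomputable def gibbsPolicy (πref r : Y → ℝ) (β : ℝ) (y : Y) : ℝ :=
  πref y * Real.exp (r y / β) / ∑ y', πref y' * Real.exp (r y' / β)

variable [Nonempty Y] {πref : Y → ℝ}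

theorem sum_mul_exp_pos (href : ∀ y, 0 < πref y) (r : Y → ℝ) (β : ℝ) :
    0 < ∑ y, πref y * Real.exp (r y / β) :=
  sum_pos (fun y _ => mul_pos (href y) (Real.exp_pos _)) univ_nonempty

theorem gibbsPolicy_pos (href : ∀ y, 0 < πref y) (r : Y → ℝ) (β : ℝ) (y : Y) :
    0 < gibbsPolicy πref r β y :=
  div_pos (mul_pos (href y) (Real.exp_pos _)) (sum_mul_exp_pos href r β)

theorem sum_gibbsPolicy (href : ∀ y, 0 < πref y) (r : Y → ℝ) (β : ℝ) :
    ∑ y, gibbsPolicy πref r β y = 1 := by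
  simp only [gibbsPolicy]
  rw [← sum_div, div_self (sum_mul_exp_pos href r β).ne']

theorem mul_log_gibbsPolicy_div (href : ∀ y, 0 < πref y) (r : Y → ℝ) {β : ℝ} (hβ : β ≠ 0)
    (y : Y) : β * Real.log (gibbsPolicy πref r β y / πref y)
      = r y - β * Real.log (∑ y', πref y' * Real.exp (r y' / β)) := by
  have hZ := (sum_mul_exp_pos href r β).ne'
  have hdiv : gibbsPolicy πref r β y / πref y
      = Real.exp (r y / β) / ∑ y', πref y' * Real.exp (r y' / β) := by
    rw [gibbsPolicy]
    field_simp [(href y).ne']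
  rw [hdiv, Real.log_div (Real.exp_pos _).ne' hZ, Real.log_exp, mul_sub, mul_div_cancel₀ _ hβ]

end

theorem stmt_19_general {Y : Type*} [Fintype Y] [Nonempty Y]
    (πref : Y → ℝ) (href_pos : ∀ y, 0 < πref y)
    (β : ℝ) (hβ : 0 < β)
    (f : (Y → ℝ) → (Y → ℝ))
    (hf : ∀ π : Y → ℝ, ∀ y, f π y = β * Real.log (π y / πref y)) :
    -- injectivity modulo additive constants
    (∀ π₁ π₂ : Y → ℝ,
      (∀ y, 0 < π₁ y) → (∑ y, π₁ y = 1) →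
      (∀ y, 0 < π₂ y) → (∑ y, π₂ y = 1) →
      (∃ c : ℝ, ∀ y, f π₁ y = f π₂ y + c) → π₁ = π₂) ∧
    -- surjectivity onto every class of rewards modulo constants
    (∀ r : Y → ℝ, ∃ π : Y → ℝ, (∀ y, 0 < π y) ∧ (∑ y, π y = 1) ∧
      ∃ c : ℝ, ∀ y, f π y = r y + c) ∧
    -- the inverse is r ↦ π_r
    (∀ r : Y → ℝ, ∀ πr : Y → ℝ,
      (∀ y, πr y = πref y * Real.exp (r y / β) /
          (∑ y', πref y' * Real.exp (r y' / β))) →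
      ∃ c : ℝ, ∀ y, f πr y = r y + c) := by
  have hf_gibbs (r : Y → ℝ) : ∃ c : ℝ, ∀ y, f (gibbsPolicy πref r β) y = r y + c :=
    ⟨_, fun y => by rw [hf, mul_log_gibbsPolicy_div href_pos r hβ.ne', sub_eq_add_neg]⟩
  refine ⟨?_, fun r => ⟨_, gibbsPolicy_pos href_pos r β, sum_gibbsPolicy href_pos r β,
    hf_gibbs r⟩, fun r πr hπr => funext hπr ▸ hf_gibbs r⟩
  rintro π₁ π₂ h₁ hs₁ h₂ hs₂ ⟨c, hc⟩
  refine eq_of_forall_log_eq_add_const (a := c / β) h₁ h₂ hs₁ hs₂ fun y => ?_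
  have hcy := hc y
  rw [hf, hf, Real.log_div (h₁ y).ne' (href_pos y).ne',
    Real.log_div (h₂ y).ne' (href_pos y).ne'] at hcy
  field_simp
  linear_combination hcy

/-- The map `π ↦ [f(π)]`, `f(π)(y) = β·log(π(y)/π_ref(y))`, is a bijection from fully
supported policies to rewards modulo additive constants, with inverse
`[r] ↦ π_r`, `π_r(y) ∝ π_ref(y)·exp(r(y)/β)`: it is injective modulo constants,
surjective onto every class `[r]`, and `f(π_r)` differs from `r` by a constant. -/
theorem stmt_19 {Y : Type*} [Fintype Y] [Nonempty Y]
    (πref : Y → ℝ) (href_pos : ∀ y, 0 < πref y) (href_sum : ∑ y, πref y = 1)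
    (β : ℝ) (hβ : 0 < β)
    (f : (Y → ℝ) → (Y → ℝ))
    (hf : ∀ π : Y → ℝ, ∀ y, f π y = β * Real.log (π y / πref y)) :
    -- injectivity modulo additive constants
    (∀ π₁ π₂ : Y → ℝ,
      (∀ y, 0 < π₁ y) → (∑ y, π₁ y = 1) →
      (∀ y, 0 < π₂ y) → (∑ y, π₂ y = 1) →
      (∃ c : ℝ, ∀ y, f π₁ y = f π₂ y + c) → π₁ = π₂) ∧
    -- surjectivity onto every class of rewards modulo constants
    (∀ r : Y → ℝ, ∃ π : Y → ℝ, (∀ y, 0 < π y) ∧ (∑ y, π y = 1) ∧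
      ∃ c : ℝ, ∀ y, f π y = r y + c) ∧
    -- the inverse is r ↦ π_r
    (∀ r : Y → ℝ, ∀ πr : Y → ℝ,
      (∀ y, πr y = πref y * Real.exp (r y / β) /
          (∑ y', πref y' * Real.exp (r y' / β))) →
      ∃ c : ℝ, ∀ y, f πr y = r y + c) :=
  stmt_19_general πref href_pos β hβ f hf
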